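/- arXiv:0909.2114 — 9 statements merged into one kernel-verified Lean document; each statement's English description precedes it below -/
import Mathlib

section
/- For all integers n and D with 1 ≤ D ≤ n and n ≥ 4, one has n^D ≤ C(n+D, D)^{ln n}, where C(n+D, D) is the binomial coefficient and the right-hand side is the real power with exponent ln n. -/
lemma central_aux : ∀ k : ℕ, 4 ≤ k → Real.exp k ≤ (Nat.centralBinom k : ℝ) := by
  intro k hk
  induction k, hk using Nat.le_induction with
  | base =>
      have h : Real.exp 1 ≤ 2.7182818286 := Real.exp_one_lt_d9.le
      have h4 : Real.exp ((4:ℕ):ℝ) = Real.exp 1 ^ 4 := by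
        rw [← Real.exp_nat_mul]; norm_num
      have hcb : (Nat.centralBinom 4 : ℝ) = 70 := by
        norm_num [Nat.centralBinom, Nat.choose]
      rw [h4, hcb]
      calc Real.exp 1 ^ 4 ≤ 2.7182818286 ^ 4 :=
            pow_le_pow_left₀ (Real.exp_pos 1).le h 4
        _ ≤ 70 := by norm_num
  | succ k hk ih =>
      have hid : ((k:ℝ)+1) * (Nat.centralBinom (k+1) : ℝ)
          = 2*(2*(k:ℝ)+1) * (Nat.centralBinom k : ℝ) := by
        exact_mod_cast congrArg (Nat.cast (R := ℝ)) (Nat.succ_mul_centralBinom_succ k)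
      have he : Real.exp ((k:ℝ)+1) = Real.exp 1 * Real.exp k := by
        rw [← Real.exp_add]; ring_nf
      have h1 : Real.exp 1 ≤ 3 := by nlinarith [Real.exp_one_lt_d9]
      have hpos : (0:ℝ) < Real.exp k := Real.exp_pos _
      have hk4 : (4:ℝ) ≤ (k:ℝ) := by exact_mod_cast hk
      have hcast : ((k+1 : ℕ) : ℝ) = (k:ℝ) + 1 := by push_cast; ring
      rw [hcast, he]
      have hstep : ((k:ℝ)+1) * (Real.exp 1 * Real.exp k)
          ≤ ((k:ℝ)+1) * (Nat.centralBinom (k+1) : ℝ) := by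
        rw [hid]
        nlinarith [mul_le_mul_of_nonneg_left ih
          (by positivity : (0:ℝ) ≤ 2*(2*(k:ℝ)+1)),
          mul_le_mul_of_nonneg_left (mul_le_mul_of_nonneg_right h1 hpos.le)
            (by linarith : (0:ℝ) ≤ (k:ℝ)+1),
          mul_nonneg (by linarith : (0:ℝ) ≤ (k:ℝ)-1) hpos.le]
      have hkpos : (0:ℝ) < (k:ℝ)+1 := by linarith
      exact le_of_mul_le_mul_left hstep hkpos

lemma exp_le_choose (n D : ℕ) (hD : 1 ≤ D) (hDn : D ≤ n) (hn : 4 ≤ n) :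
    Real.exp D ≤ (((n + D).choose D : ℕ) : ℝ) := by
  rcases le_or_gt 4 D with h4 | h4
  · have h1 : Nat.centralBinom D ≤ (n + D).choose D := by
      have h2 : 2 * D ≤ n + D := by omega
      simpa [Nat.centralBinom] using Nat.choose_le_choose D h2
    calc Real.exp D ≤ (Nat.centralBinom D : ℝ) := central_aux D h4
      _ ≤ _ := by exact_mod_cast h1
  · have he1 : Real.exp 1 ≤ 2.7182818286 := Real.exp_one_lt_d9.le
    have hp : (0:ℝ) < Real.exp 1 := Real.exp_pos 1
    interval_cases D
    · have hle : (5:ℕ) ≤ (n+1).choose 1 := by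
        rw [Nat.choose_one_right]; omega
      have : (5:ℝ) ≤ ((n+1).choose 1 : ℝ) := by exact_mod_cast hle
      have he : Real.exp ((1:ℕ):ℝ) = Real.exp 1 := by norm_num
      rw [he]; linarith
    · have hle : Nat.choose 6 2 ≤ (n+2).choose 2 := Nat.choose_le_choose 2 (by omega)
      have h15 : (15:ℝ) ≤ ((n+2).choose 2 : ℝ) := by
        have : (15:ℕ) ≤ (n+2).choose 2 := by norm_num [Nat.choose] at hle ⊢; omega
        exact_mod_cast this
      have he : Real.exp ((2:ℕ):ℝ) = Real.exp 1 ^ 2 := by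
        rw [← Real.exp_nat_mul]; norm_num
      rw [he]
      calc Real.exp 1 ^ 2 ≤ 2.7182818286 ^ 2 :=
            pow_le_pow_left₀ hp.le he1 2
        _ ≤ 15 := by norm_num
        _ ≤ _ := h15
    · have hle : Nat.choose 7 3 ≤ (n+3).choose 3 := Nat.choose_le_choose 3 (by omega)
      have h35 : (35:ℝ) ≤ ((n+3).choose 3 : ℝ) := by
        have : (35:ℕ) ≤ (n+3).choose 3 := by norm_num [Nat.choose] at hle ⊢; omega
        exact_mod_cast this
      have he : Real.exp ((3:ℕ):ℝ) = Real.exp 1 ^ 3 := by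
        rw [← Real.exp_nat_mul]; norm_num
      rw [he]
      calc Real.exp 1 ^ 3 ≤ 2.7182818286 ^ 3 :=
            pow_le_pow_left₀ hp.le he1 3
        _ ≤ 35 := by norm_num
        _ ≤ _ := h35

/-- Lemma `le:B17`(1): for integers `1 ≤ D ≤ n` with `n ≥ 4`,
`n^D ≤ C(n+D, D)^{ln n}`. -/
theorem pow_le_choose_rpow_log (n D : ℕ) (hD : 1 ≤ D) (hDn : D ≤ n) (hn : 4 ≤ n) :
    (n : ℝ) ^ D ≤ (((n + D).choose D : ℝ)) ^ (Real.log n) := by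
  have hC : Real.exp D ≤ (((n + D).choose D : ℕ) : ℝ) := exp_le_choose n D hD hDn hn
  have hn0 : (0:ℝ) < (n:ℝ) := by exact_mod_cast (by omega : 0 < n)
  have hlog : 0 ≤ Real.log n := Real.log_nonneg (by exact_mod_cast (by omega : 1 ≤ n))
  have key : ((n:ℝ)) ^ D = (Real.exp D) ^ (Real.log n) := by
    rw [← Real.rpow_natCast (n:ℝ) D, Real.rpow_def_of_pos hn0,
      Real.rpow_def_of_pos (Real.exp_pos _), Real.log_exp, mul_comm]
  rw [key]
  exact Real.rpow_le_rpow (Real.exp_pos _).le hC hlog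
end

section
/- For all integers n and D with n ≥ 1, D ≥ 1, and D² ≥ n, one has ln n ≤ 2·ln(ln C(n+D, n)) + 4, where C(n+D, n) is the binomial coefficient. -/
lemma two_pow_le_centralBinom' (m : ℕ) : 2 ^ m ≤ Nat.centralBinom m := by
  induction m with
  | zero => simp [Nat.centralBinom]
  | succ k ih =>
    have h := Nat.succ_mul_centralBinom_succ k
    have h2 : (k + 1) * 2 ^ (k + 1) ≤ (k + 1) * Nat.centralBinom (k + 1) := by
      rw [h]
      calc (k + 1) * 2 ^ (k + 1) = 2 * (k + 1) * 2 ^ k := by ring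
        _ ≤ 2 * (2 * k + 1) * Nat.centralBinom k := Nat.mul_le_mul (by omega) ih
    exact Nat.le_of_mul_le_mul_left h2 (by omega)

/-- Lemma `le:B17`(2): for integers `n, D ≥ 1` with `D² ≥ n`,
`ln n ≤ 2 ln ln C(n+D, n) + 4`. -/
theorem log_le_two_log_log_choose_add_four (n D : ℕ) (hn : 1 ≤ n) (hD : 1 ≤ D)
    (h : n ≤ D ^ 2) :
    Real.log n ≤ 2 * Real.log (Real.log ((n + D).choose n)) + 4 := by
  set m := min n D with hm
  have hm1 : 1 ≤ m := le_min hn hD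
  -- 2^m ≤ C(n+D, n)
  have hkey : 2 ^ m ≤ (n + D).choose n := by
    have h1 : 2 ^ m ≤ (2 * m).choose m := two_pow_le_centralBinom' m
    have h2 : (2 * m).choose m ≤ (n + D).choose m :=
      Nat.choose_le_choose m (by omega)
    have h3 : (n + D).choose m ≤ (n + D).choose n := by
      rcases le_total n D with hnd | hnd
      · simp [hm, min_eq_left hnd]
      · have : m = D := min_eq_right hnd
        rw [this, ← Nat.choose_symm_add]
    omega
  -- n ≤ m ^ 2
  have hnm : n ≤ m ^ 2 := by
    rcases le_total n D with hnd | hnd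
    · have : m = n := min_eq_left hnd
      nlinarith
    · have hmD : m = D := min_eq_right hnd
      rw [hmD]; exact h
  have hsqrt : Real.sqrt n ≤ (m : ℝ) := by
    rw [show ((m : ℝ)) = Real.sqrt ((m : ℝ) ^ 2) by
      rw [Real.sqrt_sq (by positivity)]]
    exact Real.sqrt_le_sqrt (by exact_mod_cast hnm)
  have hsqrt1 : (1 : ℝ) ≤ Real.sqrt n := by
    rw [show (1 : ℝ) = Real.sqrt 1 by simp]
    exact Real.sqrt_le_sqrt (by exact_mod_cast hn)
  have hlog2 : (0 : ℝ) < Real.log 2 := Real.log_pos (by norm_num)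
  have hCpos : (0 : ℝ) < ((n + D).choose n : ℝ) := by
    have := Nat.choose_pos (show n ≤ n + D by omega)
    exact_mod_cast this
  -- log C ≥ m log 2 ≥ √n log 2 > 0
  have hlogC : Real.sqrt n * Real.log 2 ≤ Real.log ((n + D).choose n) := by
    calc Real.sqrt n * Real.log 2 ≤ (m : ℝ) * Real.log 2 := by
          exact mul_le_mul_of_nonneg_right hsqrt hlog2.le
      _ = Real.log ((2 : ℝ) ^ m) := by rw [Real.log_pow]
      _ ≤ Real.log ((n + D).choose n) := by
          apply Real.log_le_log (by positivity)
          exact_mod_cast hkey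
  have hpos : (0 : ℝ) < Real.sqrt n * Real.log 2 := by positivity
  have hloglog : Real.log (Real.sqrt n * Real.log 2) ≤
      Real.log (Real.log ((n + D).choose n)) :=
    Real.log_le_log hpos hlogC
  have hexpand : Real.log (Real.sqrt n * Real.log 2)
      = Real.log n / 2 + Real.log (Real.log 2) := by
    rw [Real.log_mul (by positivity) hlog2.ne', Real.log_sqrt (by positivity)]
  have hll2 : (-2 : ℝ) ≤ Real.log (Real.log 2) := by
    rw [show (-2 : ℝ) = Real.log (Real.exp (-2)) by rw [Real.log_exp]]
    apply Real.log_le_log (Real.exp_pos _)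
    have h1 : Real.exp (-2) ≤ 1 / 4 := by
      rw [Real.exp_neg, show (2 : ℝ) = 1 + 1 by norm_num, Real.exp_add]
      have he : (4 : ℝ) ≤ Real.exp 1 * Real.exp 1 := by
        nlinarith [Real.exp_one_gt_d9]
      have := inv_anti₀ (by norm_num : (0 : ℝ) < 4) he
      linarith
    nlinarith [Real.log_two_gt_d9]
  linarith [hloglog, hexpand ▸ hloglog]
end

section
/- There exists a real constant c₀ such that for all integers n ≥ 1, D ≥ 1, and all real N with D ≤ n, N ≥ C(n+D, n), and N ≥ 3, one has n^D ≤ N^{2·ln(ln N) + c₀}; that is, for D ≤ n the quantity n^D is bounded by N^{2 ln ln N + O(1)}. -/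
open Real

lemma aux_two_pow_le_centralBinom : ∀ D : ℕ, 2 ^ D ≤ Nat.centralBinom D := by
  intro D
  induction D with
  | zero => simp [Nat.centralBinom]
  | succ k ih =>
    have h := Nat.succ_mul_centralBinom_succ k
    have h2 : (k + 1) * 2 ^ (k + 1) ≤ (k + 1) * Nat.centralBinom (k + 1) := by
      rw [h]
      calc (k + 1) * 2 ^ (k + 1) = 2 * (k + 1) * 2 ^ k := by ring
        _ ≤ 2 * (2 * k + 1) * 2 ^ k := Nat.mul_le_mul_right _ (by omega)
        _ ≤ 2 * (2 * k + 1) * Nat.centralBinom k := Nat.mul_le_mul_left _ ih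
    exact Nat.le_of_mul_le_mul_left h2 (Nat.succ_pos k)

/-- Lemma `le:B17`(4): there is a constant `c₀` such that for all integers `n, D ≥ 1` with
`D ≤ n` and all real `N ≥ max(C(n+D, n), 3)`, one has `n^D ≤ N^{2 ln ln N + c₀}`. -/
theorem pow_le_rpow_two_log_log_of_D_le_n :
    ∃ c₀ : ℝ, ∀ n D : ℕ, ∀ N : ℝ, 1 ≤ n → 1 ≤ D → D ≤ n →
      (((n + D).choose n : ℝ)) ≤ N → 3 ≤ N →
      (n : ℝ) ^ D ≤ N ^ (2 * Real.log (Real.log N) + c₀) := by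
  refine ⟨2, fun n D N hn hD hDn hNc hN3 => ?_⟩
  have hNpos : (0:ℝ) < N := by linarith
  have hDpos : (0:ℝ) < D := by exact_mod_cast hD
  have hnpos : (0:ℝ) < n := by exact_mod_cast hn
  set L := Real.log N with hLdef
  set LL := Real.log L with hLLdef
  -- L > 1
  have hL1 : 1 < L := by
    have h1 : Real.exp 1 < 3 := by
      have := Real.exp_one_lt_d9
      linarith
    calc (1:ℝ) = Real.log (Real.exp 1) := (Real.log_exp 1).symm
      _ < Real.log 3 := Real.log_lt_log (Real.exp_pos 1) h1
      _ ≤ L := Real.log_le_log (by norm_num) hN3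
  have hLL0 : 0 < LL := Real.log_pos hL1
  -- choose (n+D) D ≤ N
  have hChoose : (((n + D).choose D : ℕ) : ℝ) ≤ N := by
    rwa [Nat.choose_symm_add] at hNc
  -- 2^D ≤ N
  have h2N : (2:ℝ) ^ D ≤ N := by
    have h1 : 2 ^ D ≤ (n + D).choose D := by
      calc 2 ^ D ≤ Nat.centralBinom D := aux_two_pow_le_centralBinom D
        _ = (2 * D).choose D := Nat.centralBinom_eq_two_mul_choose D
        _ ≤ (n + D).choose D := Nat.choose_le_choose D (by omega)
    calc (2:ℝ) ^ D = ((2 ^ D : ℕ) : ℝ) := by push_cast; ring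
      _ ≤ (((n + D).choose D : ℕ) : ℝ) := by exact_mod_cast h1
      _ ≤ N := hChoose
  -- D ≤ (3/2) L
  have hDlog2 : (D:ℝ) * Real.log 2 ≤ L := by
    calc (D:ℝ) * Real.log 2 = Real.log ((2:ℝ) ^ D) := (Real.log_pow 2 D).symm
      _ ≤ L := Real.log_le_log (by positivity) h2N
  have hlog2 : (2:ℝ)/3 ≤ Real.log 2 := by
    have := Real.log_two_gt_d9
    linarith
  have hD32 : (D:ℝ) ≤ 3/2 * L := by nlinarith
  -- ((n+1)/D)^D ≤ N
  have hB : (((n:ℝ) + 1) / D) ^ D ≤ N := by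
    have h1 : ((((n + D + 1 - D) : ℕ) : ℝ) ^ D) / (Nat.factorial D : ℝ) ≤ ((n + D).choose D : ℝ) :=
      Nat.pow_le_choose D (n + D)
    have he : n + D + 1 - D = n + 1 := by omega
    rw [he] at h1
    have hfact : ((Nat.factorial D : ℕ) : ℝ) ≤ (D:ℝ) ^ D := by
      exact_mod_cast Nat.factorial_le_pow D
    have hfpos : (0:ℝ) < (Nat.factorial D : ℝ) := by exact_mod_cast D.factorial_pos
    calc (((n:ℝ) + 1) / D) ^ D = ((n:ℝ) + 1) ^ D / (D:ℝ) ^ D := div_pow _ _ _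
      _ ≤ ((n:ℝ) + 1) ^ D / (Nat.factorial D : ℝ) :=
          div_le_div_of_nonneg_left (by positivity) hfpos hfact
      _ = (((n + 1 : ℕ) : ℝ) ^ D) / (Nat.factorial D : ℝ) := by push_cast; ring
      _ ≤ ((n + D).choose D : ℝ) := h1
      _ ≤ N := hChoose
  -- key log inequality
  have hbase : (1:ℝ) ≤ ((n:ℝ) + 1) / D := by
    rw [le_div_iff₀ hDpos]
    have : (D:ℝ) ≤ (n:ℝ) := by exact_mod_cast hDn
    linarith
  have hlogB : (D:ℝ) * Real.log (((n:ℝ) + 1) / D) ≤ L := by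
    calc (D:ℝ) * Real.log (((n:ℝ) + 1) / D) = Real.log ((((n:ℝ) + 1) / D) ^ D) :=
        (Real.log_pow _ D).symm
      _ ≤ L := Real.log_le_log (by positivity) hB
  have hlogD : Real.log D ≤ LL + 1/2 := by
    have h1 : Real.log D ≤ Real.log (3/2 * L) := Real.log_le_log hDpos hD32
    have h2 : Real.log (3/2 * L) = Real.log (3/2) + LL := by
      rw [Real.log_mul (by norm_num) (by linarith)]
    have h3 : Real.log (3/2 : ℝ) ≤ 1/2 := by
      rw [Real.log_le_iff_le_exp (by norm_num)]
      have := Real.add_one_le_exp (1/2 : ℝ)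
      linarith
    linarith
  have hkey : (D:ℝ) * Real.log n ≤ (2 * LL + 2) * L := by
    have hsplit : Real.log ((n:ℝ) + 1) = Real.log (((n:ℝ) + 1) / D) + Real.log D := by
      rw [Real.log_div (by linarith) (ne_of_gt hDpos)]; ring
    have hmono : Real.log (n:ℝ) ≤ Real.log ((n:ℝ) + 1) :=
      Real.log_le_log hnpos (by linarith)
    have hDD : (D:ℝ) * Real.log D ≤ (3/2 * L) * (LL + 1/2) := by
      have hlD0 : 0 ≤ Real.log (D:ℝ) := Real.log_natCast_nonneg D
      exact mul_le_mul hD32 hlogD hlD0 (by linarith)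
    have : (D:ℝ) * Real.log n ≤ (D:ℝ) * Real.log (((n:ℝ) + 1) / D) + (D:ℝ) * Real.log D := by
      have := mul_le_mul_of_nonneg_left hmono (le_of_lt hDpos)
      rw [hsplit, mul_add] at this
      linarith
    nlinarith
  -- conclude
  have hfinal : (n:ℝ) ^ D = Real.exp ((D:ℝ) * Real.log n) := by
    rw [Real.exp_nat_mul, Real.exp_log hnpos]
  rw [hfinal, Real.rpow_def_of_pos hNpos, Real.exp_le_exp]
  calc (D:ℝ) * Real.log n ≤ (2 * LL + 2) * L := hkey
    _ = Real.log N * (2 * Real.log (Real.log N) + 2) := by rw [hLLdef, hLdef]; ring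
end

section
/- There exists a real constant c₀ such that for all integers n ≥ 1, D ≥ 1, and all real N with n ≤ D, N ≥ C(n+D, n), and N ≥ 3, one has D^n ≤ N^{2·ln(ln N) + c₀}; that is, for n ≤ D the quantity D^n is bounded by N^{2 ln ln N + O(1)}. -/
lemma aux_two_pow_le_central (n : ℕ) : 2 ^ n ≤ (2 * n).choose n := by
  induction n with
  | zero => simp
  | succ k ih =>
    have h1 : (2 * k).choose k ≤ (2 * k + 1).choose k :=
      Nat.choose_le_choose k (by omega)
    have h2 : (2 * k).choose k ≤ (2 * k + 1).choose (k + 1) := by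
      have hsymm : (2 * k + 1).choose (k + 1) = (2 * k + 1).choose k := by
        have h := Nat.choose_symm (n := 2 * k + 1) (k := k) (by omega)
        simpa [show 2 * k + 1 - k = k + 1 by omega] using h
      rw [hsymm]; exact h1
    have hkey : (2 * (k + 1)).choose (k + 1)
        = (2 * k + 1).choose k + (2 * k + 1).choose (k + 1) := by
      have : 2 * (k + 1) = (2 * k + 1) + 1 := by ring
      rw [this, Nat.choose_succ_succ]
    calc 2 ^ (k + 1) = 2 ^ k + 2 ^ k := by ring
      _ ≤ (2 * k + 1).choose k + (2 * k + 1).choose (k + 1) :=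
          add_le_add (ih.trans h1) (ih.trans h2)
      _ = (2 * (k + 1)).choose (k + 1) := hkey.symm

lemma aux_pow_le_mul_choose (n D : ℕ) : D ^ n ≤ n ^ n * (n + D).choose n := by
  have h1 : Nat.factorial D * (D + 1) ^ n ≤ Nat.factorial (D + n) := Nat.factorial_mul_pow_le_factorial
  have h2 : (n + D).choose n * Nat.factorial n * Nat.factorial D = Nat.factorial (n + D) := by
    have := Nat.choose_mul_factorial_mul_factorial (Nat.le_add_right n D)
    simpa using this
  have h3 : Nat.factorial D * D ^ n ≤ Nat.factorial D * (D + 1) ^ n :=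
    Nat.mul_le_mul_left _ (Nat.pow_le_pow_left (by omega) n)
  have h4 : Nat.factorial D * D ^ n ≤ (n + D).choose n * Nat.factorial n * Nat.factorial D := by
    rw [h2, Nat.add_comm n D]; exact h3.trans h1
  have hD : 0 < Nat.factorial D := Nat.factorial_pos D
  have h5 : D ^ n ≤ (n + D).choose n * Nat.factorial n := by
    have h4' : Nat.factorial D * (D ^ n) ≤ Nat.factorial D * ((n + D).choose n * Nat.factorial n) := by
      calc Nat.factorial D * (D ^ n) = Nat.factorial D * D ^ n := by ring
        _ ≤ (n + D).choose n * Nat.factorial n * Nat.factorial D := h4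
        _ = Nat.factorial D * ((n + D).choose n * Nat.factorial n) := by ring
    exact Nat.le_of_mul_le_mul_left h4' hD
  calc D ^ n ≤ (n + D).choose n * Nat.factorial n := h5
    _ ≤ (n + D).choose n * n ^ n := Nat.mul_le_mul_left _ (Nat.factorial_le_pow n)
    _ = n ^ n * (n + D).choose n := by ring

/-- Lemma `le:B17`(5): there is a constant `c₀` such that for all integers `n, D ≥ 1` with
`n ≤ D` and all real `N ≥ max(C(n+D, n), 3)`, one has `D^n ≤ N^{2 ln ln N + c₀}`. -/
theorem pow_le_rpow_two_log_log_of_n_le_D :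
    ∃ c₀ : ℝ, ∀ n D : ℕ, ∀ N : ℝ, 1 ≤ n → 1 ≤ D → n ≤ D →
      (((n + D).choose n : ℝ)) ≤ N → 3 ≤ N →
      (D : ℝ) ^ n ≤ N ^ (2 * Real.log (Real.log N) + c₀) := by
  refine ⟨2, fun n D N hn hD hnD hchoose hN3 => ?_⟩
  have hN0 : (0 : ℝ) < N := by linarith
  set L := Real.log N with hL
  set LL := Real.log L with hLL
  have hL1 : 1 < L := by
    have : Real.log (Real.exp 1) < Real.log N :=
      Real.log_lt_log (Real.exp_pos 1) (lt_of_lt_of_le (by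
        have := Real.exp_one_lt_d9; linarith) hN3)
    simpa using this
  have hL0 : (0 : ℝ) < L := by linarith
  have hLL0 : (0 : ℝ) < LL := Real.log_pos hL1
  have hlog2 : (0.6931471803 : ℝ) < Real.log 2 := Real.log_two_gt_d9
  have hlog2lt : Real.log 2 < 0.6931471808 := Real.log_two_lt_d9
  -- n ≤ L / log 2, i.e. n * log 2 ≤ L
  have h2n : (2 : ℝ) ^ n ≤ N := by
    have h1 : (2 : ℕ) ^ n ≤ (n + D).choose n := by
      calc (2 : ℕ) ^ n ≤ (2 * n).choose n := aux_two_pow_le_central n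
        _ ≤ (n + D).choose n := Nat.choose_le_choose n (by omega)
    calc ((2 : ℝ)) ^ n = ((2 ^ n : ℕ) : ℝ) := by push_cast; ring
      _ ≤ ((n + D).choose n : ℝ) := by exact_mod_cast h1
      _ ≤ N := hchoose
  have hnlog2 : (n : ℝ) * Real.log 2 ≤ L := by
    have := Real.log_le_log (by positivity) h2n
    rwa [Real.log_pow] at this
  have hnleM : (n : ℝ) ≤ L / Real.log 2 := by
    rw [le_div_iff₀ (by linarith)]; exact hnlog2
  have hn1 : (1 : ℝ) ≤ (n : ℝ) := by exact_mod_cast hn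
  -- main log inequality: n * log D ≤ L + n * log n
  have hDn : (D : ℝ) ^ n ≤ (n : ℝ) ^ n * N := by
    have h := aux_pow_le_mul_choose n D
    calc (D : ℝ) ^ n = ((D ^ n : ℕ) : ℝ) := by push_cast; ring
      _ ≤ ((n ^ n * (n + D).choose n : ℕ) : ℝ) := by exact_mod_cast h
      _ = (n : ℝ) ^ n * ((n + D).choose n : ℝ) := by push_cast; ring
      _ ≤ (n : ℝ) ^ n * N := by
          apply mul_le_mul_of_nonneg_left hchoose (by positivity)
  have hlogDn : (n : ℝ) * Real.log D ≤ (n : ℝ) * Real.log n + L := by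
    have hDpos : (0 : ℝ) < (D : ℝ) ^ n := by positivity
    have := Real.log_le_log hDpos hDn
    rw [Real.log_pow, Real.log_mul (by positivity) (by positivity), Real.log_pow] at this
    push_cast at this ⊢
    linarith
  -- bound n * log n
  have hM1 : (1 : ℝ) ≤ L / Real.log 2 := le_trans hn1 hnleM
  have hnlogn : (n : ℝ) * Real.log n ≤ (L / Real.log 2) * Real.log (L / Real.log 2) := by
    apply mul_le_mul hnleM
    · exact Real.log_le_log (by positivity) hnleM
    · exact Real.log_nonneg hn1
    · linarith
  have hlogdiv : Real.log (L / Real.log 2) = LL - Real.log (Real.log 2) := by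
    rw [Real.log_div (by linarith) (by linarith)]
  -- key numeric facts
  have hinv2 : L / Real.log 2 ≤ 2 * L := by
    rw [div_le_iff₀ (by linarith)]
    nlinarith
  have hc : -Real.log (Real.log 2) ≤ Real.log 2 := by
    have hge : (1 : ℝ) / 2 < Real.log 2 := by linarith
    have hlt : Real.log (1 / 2) < Real.log (Real.log 2) :=
      Real.log_lt_log (by norm_num) hge
    have hhalf : Real.log (1 / 2) = -Real.log 2 := by
      rw [Real.log_div (by norm_num) (by norm_num), Real.log_one]; ring
    rw [hhalf] at hlt
    linarith
  have hA : (L / Real.log 2) * LL ≤ 2 * L * LL :=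
    mul_le_mul_of_nonneg_right hinv2 hLL0.le
  have hB : (L / Real.log 2) * (-Real.log (Real.log 2)) ≤ L := by
    rw [div_mul_eq_mul_div, div_le_iff₀ (by linarith)]
    have := mul_le_mul_of_nonneg_left hc hL0.le
    nlinarith
  have hsum : (L / Real.log 2) * (LL - Real.log (Real.log 2))
      = (L / Real.log 2) * LL + (L / Real.log 2) * (-Real.log (Real.log 2)) := by ring
  have hkey : (n : ℝ) * Real.log D ≤ (2 * LL + 2) * L := by
    rw [hlogdiv, hsum] at hnlogn
    nlinarith
  -- conclude via logs
  have hrpos : (0 : ℝ) < N ^ (2 * LL + 2) := Real.rpow_pos_of_pos hN0 _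
  have hDpow : (0 : ℝ) < (D : ℝ) ^ n := by
    have : (1 : ℝ) ≤ (D : ℝ) := by exact_mod_cast hD
    positivity
  rw [← Real.log_le_log_iff hDpow hrpos, Real.log_pow, Real.log_rpow hN0]
  exact hkey
end

section
/- For all integers m and n with 0 < m < n, the quantity ε_{n,m} := ln C(n, m) − n·H(m/n) − (1/2)·ln(n/(m(n−m))) + 1 satisfies −0.1 < ε_{n,m} < 0.2, where H(x) = x·ln(1/x) + (1−x)·ln(1/(1−x)) is the binary entropy function and C(n, m) the binomial coefficient. -/
/-- The binary entropy function `H(x) = x ln(1/x) + (1-x) ln(1/(1-x))`. -/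
noncomputable def binaryEntropy' (x : ℝ) : ℝ :=
  x * Real.log (1 / x) + (1 - x) * Real.log (1 / (1 - x))

open Real Stirling

lemma stirling_lb (k : ℕ) (hk : 0 < k) : Real.sqrt π ≤ stirlingSeq k := by
  obtain ⟨j, rfl⟩ := Nat.exists_eq_succ_of_ne_zero hk.ne'
  exact Antitone.le_of_tendsto stirlingSeq'_antitone
    (tendsto_stirlingSeq_sqrt_pi.comp (Filter.tendsto_add_atTop_nat 1)) j

lemma stirling_ub (k : ℕ) (hk : 0 < k) : stirlingSeq k ≤ Real.exp 1 / Real.sqrt 2 := by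
  obtain ⟨j, rfl⟩ := Nat.exists_eq_succ_of_ne_zero hk.ne'
  have := stirlingSeq'_antitone (Nat.zero_le j)
  simpa using this

lemma log_stirling_bounds (k : ℕ) (hk : 0 < k) :
    (1/2) * Real.log π ≤ Real.log (stirlingSeq k) ∧
      Real.log (stirlingSeq k) ≤ 1 - (1/2) * Real.log 2 := by
  have hpos : 0 < stirlingSeq k := by
    obtain ⟨j, rfl⟩ := Nat.exists_eq_succ_of_ne_zero hk.ne'
    exact stirlingSeq'_pos j
  constructor
  · have := Real.log_le_log (Real.sqrt_pos.2 pi_pos) (stirling_lb k hk)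
    rw [Real.log_sqrt pi_pos.le] at this; linarith
  · have := Real.log_le_log hpos (stirling_ub k hk)
    rw [Real.log_div (Real.exp_pos 1).ne' (by positivity), Real.log_exp,
      Real.log_sqrt (by norm_num)] at this; linarith

lemma log_two_pi_gt : (1.8:ℝ) < Real.log (2 * π) := by
  have h5 : Real.exp 1.8 ^ 5 < 6.28 ^ 5 := by
    have h1 : Real.exp 1.8 ^ 5 = Real.exp 1 ^ 9 := by
      rw [← Real.exp_nat_mul, ← Real.exp_nat_mul]; norm_num
    have h2 : Real.exp 1 ^ 9 < 2.7182818286 ^ 9 :=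
      pow_lt_pow_left₀ Real.exp_one_lt_d9 (Real.exp_pos 1).le (by norm_num)
    calc Real.exp 1.8 ^ 5 = Real.exp 1 ^ 9 := h1
      _ < 2.7182818286 ^ 9 := h2
      _ < 6.28 ^ 5 := by norm_num
  have hexp : Real.exp 1.8 < 6.28 := lt_of_pow_lt_pow_left₀ 5 (by norm_num) h5
  have h628 : (6.28:ℝ) < 2 * π := by
    have := Real.pi_gt_d6
    linarith
  calc (1.8:ℝ) = Real.log (Real.exp 1.8) := (Real.log_exp 1.8).symm
    _ < Real.log 6.28 := Real.log_lt_log (Real.exp_pos _) hexp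
    _ < Real.log (2 * π) := Real.log_lt_log (by norm_num) h628

/-- Stirling estimate for binomial coefficients (`eq:binomial-approx`): for `0 < m < n`,
the error term `ε_{n,m} = ln C(n,m) − n H(m/n) − ½ ln(n/(m(n−m))) + 1` satisfies
`−0.1 < ε_{n,m} < 0.2`. -/
theorem stirling_binomial_error_bounds (n m : ℕ) (hm : 0 < m) (hmn : m < n) :
    -0.1 < Real.log (n.choose m) - n * binaryEntropy' (m / n)
        - (1 / 2) * Real.log (n / (m * (n - m))) + 1 ∧
      Real.log (n.choose m) - n * binaryEntropy' (m / n)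
        - (1 / 2) * Real.log (n / (m * (n - m))) + 1 < 0.2 := by
  set b : ℕ := n - m with hb_def
  have hb : 0 < b := Nat.sub_pos_of_lt hmn
  have hn : 0 < n := hm.trans hmn
  have hmr : (0:ℝ) < m := by exact_mod_cast hm
  have hbr : (0:ℝ) < b := by exact_mod_cast hb
  have hnr : (0:ℝ) < n := by exact_mod_cast hn
  have hnb : (n:ℝ) = m + b := by
    have : m + b = n := Nat.add_sub_cancel' hmn.le
    exact_mod_cast this.symm
  have hsub : (n:ℝ) - m = b := by rw [hnb]; ring
  -- factorial identity
  have hfac : ((Nat.factorial n) : ℝ) = (n.choose m : ℝ) * (Nat.factorial m) * (Nat.factorial b) := by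
    exact_mod_cast (Nat.choose_mul_factorial_mul_factorial hmn.le).symm
  have hchoose_pos : (0:ℝ) < (n.choose m : ℝ) := by
    exact_mod_cast Nat.choose_pos hmn.le
  have hlogfac : Real.log ((Nat.factorial n)) = Real.log (n.choose m) + Real.log ((Nat.factorial m)) + Real.log ((Nat.factorial b)) := by
    rw [hfac, Real.log_mul (by positivity) (by positivity),
      Real.log_mul (by positivity) (by positivity)]
  -- stirlingSeq formulas
  have hfn := log_stirlingSeq_formula n
  have hfm := log_stirlingSeq_formula m
  have hfb := log_stirlingSeq_formula b
  -- expand the log terms in the formulas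
  have hexp2 : ∀ k : ℕ, 0 < k → Real.log (2 * (k:ℝ)) = Real.log 2 + Real.log k := by
    intro k hk
    exact Real.log_mul (by norm_num) (by exact_mod_cast hk.ne')
  have hexpe : ∀ k : ℕ, 0 < k → Real.log ((k:ℝ) / Real.exp 1) = Real.log k - 1 := by
    intro k hk
    rw [Real.log_div (by exact_mod_cast hk.ne') (Real.exp_pos 1).ne', Real.log_exp]
  rw [hexp2 n hn, hexpe n hn] at hfn
  rw [hexp2 m hm, hexpe m hm] at hfm
  rw [hexp2 b hb, hexpe b hb] at hfb
  -- entropy identity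
  have hH : (n:ℝ) * binaryEntropy' ((m:ℝ) / n) =
      (n:ℝ) * Real.log n - (m:ℝ) * Real.log m - (b:ℝ) * Real.log b := by
    unfold binaryEntropy'
    have h1 : (1:ℝ) / ((m:ℝ)/n) = (n:ℝ)/m := by field_simp
    have h2 : 1 - (m:ℝ)/n = (b:ℝ)/n := by field_simp; linarith [hnb]
    have h3 : (1:ℝ) / ((b:ℝ)/n) = (n:ℝ)/b := by field_simp
    rw [h1, h2, h3, Real.log_div hnr.ne' hmr.ne', Real.log_div hnr.ne' hbr.ne']
    have hmul : ∀ A B : ℝ, (n:ℝ) * ((m:ℝ)/n * A + (b:ℝ)/n * B) = m * A + b * B := by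
      intro A B; field_simp
    rw [hmul, hnb]
    ring
  -- the half-log term
  have hhalf : Real.log ((n:ℝ) / ((m:ℝ) * ((n:ℝ) - (m:ℝ)))) =
      Real.log n - Real.log m - Real.log b := by
    rw [hsub, Real.log_div hnr.ne' (by positivity), Real.log_mul hmr.ne' hbr.ne']
    ring
  -- main identity
  have key : Real.log (n.choose m) - n * binaryEntropy' ((m:ℝ) / n)
        - (1 / 2) * Real.log ((n:ℝ) / ((m:ℝ) * ((n:ℝ) - (m:ℝ)))) + 1 =
      Real.log (stirlingSeq n) - Real.log (stirlingSeq m) - Real.log (stirlingSeq b)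
        - (1/2) * Real.log 2 + 1 := by
    rw [hH, hhalf]
    linarith [hfn, hfm, hfb, hnb, hlogfac]
  have Bn := log_stirling_bounds n hn
  have Bm := log_stirling_bounds m hm
  have Bb := log_stirling_bounds b hb
  have hlog2pi : Real.log (2 * π) = Real.log 2 + Real.log π :=
    Real.log_mul (by norm_num) pi_pos.ne'
  have h18 := log_two_pi_gt
  constructor <;> rw [key] <;> [linarith [Bn.1, Bm.2, Bb.2]; linarith [Bn.2, Bm.1, Bb.1]]
end

section
/- Let E be a real inner product space and let f, g ∈ E be linearly independent, with r = ‖f‖, s = ‖g‖, and α ∈ (0, π) the angle between f and g (so cos α = ⟨f, g⟩/(r·s)). For τ ∈ (0, 1], set t = s/(r·sin α·cot(τα) − r·cos α + s). Then 0 < t ≤ 1 and the angle between g and the vector t·f + (1−t)·g equals τα. -/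
/-!
In the plane spanned by `f` and `g`, with `g` along the first axis, `f = r (cos α, sin α)` and
`t • f + (1 - t) • g = (t r cos α + (1 - t) s, t r sin α)`. The value of `t` is exactly the one
for which the first coordinate is `cot (τα)` times the second, so the combination is
`ρ (cos τα, sin τα)` with `ρ = t r sin α / sin τα > 0`, and its angle with `g` is `τα`.
The bound `0 < t ≤ 1` says `r cos α ≤ r sin α cot (τα)`, i.e. `sin (α - τα) ≥ 0`.
-/

open Real InnerProductGeometry
open scoped RealInnerProductSpace

lemma LinearIndependent.pair_ne_smul {R M : Type*} [Ring R] [Nontrivial R] [AddCommGroup M]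
    [Module R M] {x y : M} (h : LinearIndependent R ![x, y]) (c : R) : y ≠ c • x := by
  intro hy
  have := (LinearIndependent.pair_iff.mp h c (-1) (by simp [hy])).2
  exact neg_ne_zero.mpr one_ne_zero this

namespace InnerProductGeometry

variable {V : Type*} [NormedAddCommGroup V] [InnerProductSpace ℝ V] {x y : V}

lemma angle_pos_of_linearIndependent (h : LinearIndependent ℝ ![x, y]) : 0 < angle x y := by
  refine (angle_nonneg x y).lt_of_ne fun h0 => ?_
  obtain ⟨-, c, -, hc⟩ := angle_eq_zero_iff.mp h0.symm
  exact h.pair_ne_smul c hc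

lemma angle_lt_pi_of_linearIndependent (h : LinearIndependent ℝ ![x, y]) : angle x y < π := by
  refine (angle_le_pi x y).lt_of_ne fun hπ => ?_
  obtain ⟨-, c, -, hc⟩ := angle_eq_pi_iff.mp hπ
  exact h.pair_ne_smul c hc

lemma inner_smul_add_smul_right (a b : ℝ) :
    ⟪y, a • x + b • y⟫ = ‖y‖ * (a * ‖x‖ * cos (angle x y) + b * ‖y‖) := by
  rw [inner_add_right, real_inner_smul_right, real_inner_smul_right, real_inner_comm,
    ← cos_angle_mul_norm_mul_norm, real_inner_self_eq_norm_mul_norm]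
  ring

lemma norm_smul_add_smul_sq (a b : ℝ) :
    ‖a • x + b • y‖ ^ 2 =
      (a * ‖x‖ * cos (angle x y) + b * ‖y‖) ^ 2 + (a * ‖x‖ * sin (angle x y)) ^ 2 := by
  rw [norm_add_sq_real, real_inner_smul_left, real_inner_smul_right,
    ← cos_angle_mul_norm_mul_norm, norm_smul, norm_smul, Real.norm_eq_abs, Real.norm_eq_abs,
    mul_pow, mul_pow, sq_abs, sq_abs]
  linear_combination -(a * ‖x‖) ^ 2 * sin_sq_add_cos_sq (angle x y)

lemma angle_eq_of_inner_eq_of_norm_sq_eq {ρ θ : ℝ} (hx : x ≠ 0) (hρ : 0 < ρ) (hθ₀ : 0 ≤ θ)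
    (hθπ : θ ≤ π) (hinner : ⟪x, y⟫ = ‖x‖ * (ρ * cos θ))
    (hnorm : ‖y‖ ^ 2 = (ρ * cos θ) ^ 2 + (ρ * sin θ) ^ 2) :
    angle x y = θ := by
  have hy : ‖y‖ = ρ := by
    rw [← sq_eq_sq₀ (norm_nonneg y) hρ.le, hnorm]
    linear_combination ρ ^ 2 * sin_sq_add_cos_sq θ
  have hx' : ‖x‖ ≠ 0 := norm_ne_zero_iff.mpr hx
  rw [angle, hinner, hy, ← mul_assoc, mul_div_cancel_left₀ _ (mul_ne_zero hx' hρ.ne'),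
    arccos_cos hθ₀ hθπ]

end InnerProductGeometry

lemma Real.cos_le_sin_mul_cot {α θ : ℝ} (hθ : 0 < θ) (hθα : θ ≤ α) (hα : α < π) :
    cos α ≤ sin α * cot θ := by
  have hsinθ : 0 < sin θ := sin_pos_of_pos_of_lt_pi hθ (hθα.trans_lt hα)
  have hsub : 0 ≤ sin (α - θ) := sin_nonneg_of_nonneg_of_le_pi (by linarith) (by linarith)
  rw [sin_sub] at hsub
  rw [cot_eq_cos_div_sin, mul_div_assoc', le_div_iff₀ hsinθ]
  linarith

/-- Parametrizing a segment by angle (claim in Proposition `prop:a-ALH`): let `f, g` be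
linearly independent vectors in a real inner product space, `r = ‖f‖`, `s = ‖g‖`, and let
`α` be the angle between `f` and `g`. For `τ ∈ (0,1]`, set
`t = s / (r sin α · cot(τα) − r cos α + s)`. Then `0 < t ≤ 1` and the angle between `g`
and `t•f + (1−t)•g` equals `τα`. -/
theorem angle_combination_eq (E : Type*) [NormedAddCommGroup E] [InnerProductSpace ℝ E]
    (f g : E) (hli : LinearIndependent ℝ ![f, g]) (τ : ℝ) (hτ0 : 0 < τ) (hτ1 : τ ≤ 1) :
    let r : ℝ := ‖f‖
    let s : ℝ := ‖g‖
    let α : ℝ := Real.arccos ((inner ℝ f g : ℝ) / (r * s))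
    let t : ℝ := s / (r * Real.sin α * Real.cot (τ * α) - r * Real.cos α + s)
    0 < t ∧ t ≤ 1 ∧
      Real.arccos ((inner ℝ g (t • f + (1 - t) • g) : ℝ) / (‖g‖ * ‖t • f + (1 - t) • g‖))
        = τ * α := by
  intro r s α t
  change 0 < t ∧ t ≤ 1 ∧ angle g (t • f + (1 - t) • g) = τ * α
  have hα0 : 0 < α := angle_pos_of_linearIndependent hli
  have hαπ : α < π := angle_lt_pi_of_linearIndependent hli
  have hg : g ≠ 0 := hli.ne_zero 1
  have hr : 0 < r := norm_pos_iff.mpr (hli.ne_zero 0)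
  have hs : 0 < s := norm_pos_iff.mpr hg
  have hθ0 : 0 < τ * α := mul_pos hτ0 hα0
  have hθα : τ * α ≤ α := mul_le_of_le_one_left hα0.le hτ1
  have hsinα : 0 < sin α := sin_pos_of_pos_of_lt_pi hα0 hαπ
  have hsinθ : 0 < sin (τ * α) := sin_pos_of_pos_of_lt_pi hθ0 (hθα.trans_lt hαπ)
  have hD : s ≤ r * sin α * cot (τ * α) - r * cos α + s := by
    have := mul_le_mul_of_nonneg_left (cos_le_sin_mul_cot hθ0 hθα hαπ) hr.le
    linarith
  have ht0 : 0 < t := div_pos hs (hs.trans_le hD)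
  refine ⟨ht0, (div_le_one (hs.trans_le hD)).mpr hD, ?_⟩
  have htD : t * (r * sin α * cot (τ * α) - r * cos α + s) = s :=
    div_mul_cancel₀ s (hs.trans_le hD).ne'
  clear_value t
  set ρ := t * r * sin α / sin (τ * α)
  have hcos : t * r * cos α + (1 - t) * s = ρ * cos (τ * α) := by
    rw [cot_eq_cos_div_sin] at htD
    simp only [ρ]
    linear_combination -htD
  have hsin : t * r * sin α = ρ * sin (τ * α) := by simp only [ρ]; field_simp
  apply angle_eq_of_inner_eq_of_norm_sq_eq (ρ := ρ) hg (by positivity) hθ0.le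
    (hθα.trans hαπ.le)
  · rw [← hcos]
    exact inner_smul_add_smul_right t (1 - t)
  · rw [← hcos, ← hsin]
    exact norm_smul_add_smul_sq t (1 - t)
end

section
/- Let E be a real inner product space, let f, g ∈ E be linearly independent, and let α ∈ (0, π) be the angle between f and g. For t ∈ [0, 1] write q_t = t·f + (1−t)·g, and let θ(t) denote the angle between g and q_t. Then for every t ∈ (0, 1), the function θ is differentiable at t with derivative θ′(t) = sin α · ‖f‖·‖g‖ / ‖q_t‖². -/
/-! Along a differentiable curve `x`, the angle `arccos (⟪g, x⟫ / (‖g‖ ‖x‖))` has derivative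
`(⟪g, x⟫ ⟪x, x'⟫ - ⟪g, x'⟫ ‖x‖²) / (‖x‖² √Γ(g, x))`, where `Γ(g, x) = ‖g‖² ‖x‖² - ⟪g, x⟫²` is the
Gram determinant. On the segment `q_t = t f + (1 - t) g` one has `Γ(g, q_t) = t² Γ(f, g)` and the
numerator equals `t Γ(f, g)`, so the derivative is `√Γ(f, g) / ‖q_t‖² = sin α ‖f‖ ‖g‖ / ‖q_t‖²`. -/

open InnerProductGeometry Real
open scoped RealInnerProductSpace

section

variable {E : Type*} [NormedAddCommGroup E] [InnerProductSpace ℝ E]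

theorem sq_inner_lt_of_linearIndependent {f g : E} (h : LinearIndependent ℝ ![f, g]) :
    ⟪f, g⟫ ^ 2 < ‖f‖ ^ 2 * ‖g‖ ^ 2 := by
  have := (Matrix.posDef_gram_of_linearIndependent h).det_pos
  simp only [Matrix.det_fin_two, Matrix.gram_apply, Matrix.cons_val_zero, Matrix.cons_val_one,
    real_inner_self_eq_norm_sq, real_inner_comm f g] at this
  linarith

theorem HasDerivAt.norm_of_ne_zero {x : ℝ → E} {v : E} {t : ℝ} (hx : HasDerivAt x v t)
    (h0 : x t ≠ 0) : HasDerivAt (fun u => ‖x u‖) (⟪x t, v⟫ / ‖x t‖) t := by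
  have := hx.norm_sq.sqrt (by positivity)
  simp only [sqrt_sq (norm_nonneg _)] at this
  convert this using 1
  field_simp

theorem HasDerivAt.const_angle {x : ℝ → E} {v : E} {t : ℝ} (g : E) (hx : HasDerivAt x v t)
    (hgx : ⟪g, x t⟫ ^ 2 < ‖g‖ ^ 2 * ‖x t‖ ^ 2) :
    HasDerivAt (fun u => angle g (x u))
      ((⟪g, x t⟫ * ⟪x t, v⟫ - ⟪g, v⟫ * ‖x t‖ ^ 2) /
        (‖x t‖ ^ 2 * √(‖g‖ ^ 2 * ‖x t‖ ^ 2 - ⟪g, x t⟫ ^ 2))) t := by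
  have hg : 0 < ‖g‖ := norm_pos_iff.2 (by rintro rfl; simp at hgx)
  have hxt : 0 < ‖x t‖ := norm_pos_iff.2 (by intro h; simp [h] at hgx)
  have hc := ((hasDerivAt_const t g).inner ℝ hx).div
    ((hx.norm_of_ne_zero (norm_pos_iff.1 hxt)).const_mul ‖g‖) (by positivity)
  have hc1 : |⟪g, x t⟫ / (‖g‖ * ‖x t‖)| < 1 := by
    rw [abs_div, abs_of_pos (mul_pos hg hxt), div_lt_one (mul_pos hg hxt)]
    exact abs_lt_of_sq_lt_sq (by rwa [mul_pow]) (by positivity)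
  have hsqrt : √(1 - (⟪g, x t⟫ / (‖g‖ * ‖x t‖)) ^ 2) =
      √(‖g‖ ^ 2 * ‖x t‖ ^ 2 - ⟪g, x t⟫ ^ 2) / (‖g‖ * ‖x t‖) := by
    have h : 1 - (⟪g, x t⟫ / (‖g‖ * ‖x t‖)) ^ 2 =
        (‖g‖ ^ 2 * ‖x t‖ ^ 2 - ⟪g, x t⟫ ^ 2) / (‖g‖ * ‖x t‖) ^ 2 := by
      field_simp
    rw [h, sqrt_div' _ (sq_nonneg _), sqrt_sq (mul_pos hg hxt).le]
  refine ((hasDerivAt_arccos (abs_lt.1 hc1).1.ne' (abs_lt.1 hc1).2.ne).comp t hc).congr_deriv ?_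
  rw [hsqrt, inner_zero_left, add_zero]
  field_simp
  ring

theorem sq_norm_mul_sq_norm_sub_sq_inner_smul_add_smul (f g : E) (s r : ℝ) :
    ‖g‖ ^ 2 * ‖s • f + r • g‖ ^ 2 - ⟪g, s • f + r • g⟫ ^ 2 =
      s ^ 2 * (‖f‖ ^ 2 * ‖g‖ ^ 2 - ⟪f, g⟫ ^ 2) := by
  simp only [← real_inner_self_eq_norm_sq, inner_add_left, inner_add_right,
    real_inner_smul_left, real_inner_smul_right, real_inner_comm f g]
  ring

theorem inner_mul_inner_sub_inner_mul_sq_norm_smul_add_one_sub_smul (f g : E) (t : ℝ) :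
    ⟪g, t • f + (1 - t) • g⟫ * ⟪t • f + (1 - t) • g, f - g⟫ -
        ⟪g, f - g⟫ * ‖t • f + (1 - t) • g‖ ^ 2 =
      t * (‖f‖ ^ 2 * ‖g‖ ^ 2 - ⟪f, g⟫ ^ 2) := by
  simp only [← real_inner_self_eq_norm_sq, inner_add_left, inner_add_right, inner_sub_right,
    real_inner_smul_left, real_inner_smul_right, real_inner_comm f g]
  ring

theorem hasDerivAt_angle_smul_add_one_sub_smul {f g : E} {t : ℝ}
    (hfg : ⟪f, g⟫ ^ 2 < ‖f‖ ^ 2 * ‖g‖ ^ 2) (ht : 0 < t) :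
    HasDerivAt (fun u => angle g (u • f + (1 - u) • g))
      (√(‖f‖ ^ 2 * ‖g‖ ^ 2 - ⟪f, g⟫ ^ 2) / ‖t • f + (1 - t) • g‖ ^ 2) t := by
  have hq : HasDerivAt (fun u : ℝ => u • f + (1 - u) • g) (f - g) t := by
    refine (((hasDerivAt_id t).smul_const f).add
      (((hasDerivAt_const t 1).sub (hasDerivAt_id t)).smul_const g)).congr_deriv ?_
    simp only [one_smul, zero_sub, neg_smul, ← sub_eq_add_neg]
  have hgram := sq_norm_mul_sq_norm_sub_sq_inner_smul_add_smul f g t (1 - t)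
  have hpos : 0 < ‖f‖ ^ 2 * ‖g‖ ^ 2 - ⟪f, g⟫ ^ 2 := sub_pos.2 hfg
  refine (hq.const_angle g (by nlinarith [mul_pos (pow_pos ht 2) hpos])).congr_deriv ?_
  rw [inner_mul_inner_sub_inner_mul_sq_norm_smul_add_one_sub_smul, hgram, sqrt_mul (sq_nonneg t),
    sqrt_sq ht.le]
  have hq0 : ‖t • f + (1 - t) • g‖ ≠ 0 := by
    intro h
    rw [h] at hgram
    nlinarith [mul_pos (pow_pos ht 2) hpos, sq_nonneg ⟪g, t • f + (1 - t) • g⟫]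
  field_simp
  rw [sq_sqrt hpos.le]

end

theorem hasDerivAt_angle_combination_general (E : Type*) [NormedAddCommGroup E]
    [InnerProductSpace ℝ E] (f g : E) (hli : LinearIndependent ℝ ![f, g])
    (t : ℝ) (ht0 : 0 < t) :
    let α : ℝ := Real.arccos ((inner ℝ f g : ℝ) / (‖f‖ * ‖g‖))
    let q : ℝ → E := fun u => u • f + (1 - u) • g
    HasDerivAt (fun u => Real.arccos ((inner ℝ g (q u) : ℝ) / (‖g‖ * ‖q u‖)))
      (Real.sin α * (‖f‖ * ‖g‖) / ‖q t‖ ^ 2) t := by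
  intro α q
  have hsin : sin α * (‖f‖ * ‖g‖) = √(‖f‖ ^ 2 * ‖g‖ ^ 2 - ⟪f, g⟫ ^ 2) := by
    rw [show α = angle f g from rfl, sin_angle_mul_norm_mul_norm, real_inner_self_eq_norm_sq,
      real_inner_self_eq_norm_sq, ← sq]
  rw [hsin]
  exact hasDerivAt_angle_smul_add_one_sub_smul (sq_inner_lt_of_linearIndependent hli) ht0

/-- Claim `speed` in Proposition `prop:a-ALH`: with `q_t = t•f + (1−t)•g` for linearly
independent `f, g` in a real inner product space, and `θ(t)` the angle between `g` and `q_t`,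
for every `t ∈ (0,1)` the function `θ` has derivative
`θ′(t) = sin α · ‖f‖ ‖g‖ / ‖q_t‖²` at `t`, where `α` is the angle between `f` and `g`. -/
theorem hasDerivAt_angle_combination (E : Type*) [NormedAddCommGroup E]
    [InnerProductSpace ℝ E] (f g : E) (hli : LinearIndependent ℝ ![f, g])
    (t : ℝ) (ht0 : 0 < t) (ht1 : t < 1) :
    let α : ℝ := Real.arccos ((inner ℝ f g : ℝ) / (‖f‖ * ‖g‖))
    let q : ℝ → E := fun u => u • f + (1 - u) • g
    HasDerivAt (fun u => Real.arccos ((inner ℝ g (q u) : ℝ) / (‖g‖ * ‖q u‖)))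
      (Real.sin α * (‖f‖ * ‖g‖) / ‖q t‖ ^ 2) t :=
  hasDerivAt_angle_combination_general E f g hli t ht0
end

section
/- For all x, y ∈ ℂⁿ one has arccos( |1 + Σᵢ xᵢ·conj(yᵢ)| / (√(1+‖x‖²)·√(1+‖y‖²)) ) ≤ ‖x − y‖; that is, the Fubini–Study (projective) distance between the projective points (1:x₁:⋯:xₙ) and (1:y₁:⋯:yₙ) in ℂP^n is at most the affine Euclidean distance ‖x − y‖. -/
/-! With `d = ‖x - y‖` and `c = (‖x‖² + ‖y‖²) / 2`, the numerator is at least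
`1 + Re ⟪y, x⟫ = 1 + c - d² / 2` and, by AM–GM, the denominator is at most `1 + c`. Since
`d² ≤ 4c`, it remains to show `cos d * (1 + c) ≤ 1 + c - d² / 2` for `d ≤ π`; writing `d = 2t`
this reduces to `t² ≤ sin² t * (1 + t²)`, i.e. to `t cos t ≤ sin t`, which is `t ≤ tan t`. -/

open Real
open scoped InnerProductSpace

namespace Real

theorem mul_cos_le_sin {t : ℝ} (ht₀ : 0 ≤ t) (ht : t ≤ π / 2) : t * cos t ≤ sin t := by
  rcases ht.lt_or_eq with ht | rfl
  · have hcos : 0 < cos t := cos_pos_of_mem_Ioo ⟨by linarith [pi_pos], ht⟩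
    rw [← le_div_iff₀ hcos, ← tan_eq_sin_div_cos]
    exact le_tan ht₀ ht
  · simp

theorem sq_le_sin_sq_mul_one_add_sq {t : ℝ} (ht₀ : 0 ≤ t) (ht : t ≤ π / 2) :
    t ^ 2 ≤ sin t ^ 2 * (1 + t ^ 2) := by
  have h := pow_le_pow_left₀ (mul_nonneg ht₀ (cos_nonneg_of_mem_Icc ⟨by linarith, ht⟩))
    (mul_cos_le_sin ht₀ ht) 2
  nlinarith [sin_sq_add_cos_sq t]

theorem cos_mul_one_add_le {d c : ℝ} (hd₀ : 0 ≤ d) (hd : d ≤ π) (hc : d ^ 2 ≤ 4 * c) :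
    cos d * (1 + c) ≤ 1 + c - d ^ 2 / 2 := by
  obtain ⟨t, rfl⟩ : ∃ t, d = 2 * t := ⟨d / 2, by ring⟩
  have := sq_le_sin_sq_mul_one_add_sq (t := t) (by linarith) (by linarith)
  rw [cos_two_mul]
  nlinarith [sin_sq_add_cos_sq t, sq_nonneg (sin t)]

theorem sqrt_one_add_sq_mul_sqrt_one_add_sq_le (a b : ℝ) :
    √(1 + a ^ 2) * √(1 + b ^ 2) ≤ 1 + (a ^ 2 + b ^ 2) / 2 := by
  rw [← sqrt_mul (by positivity)]
  refine sqrt_le_iff.2 ⟨by positivity, ?_⟩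
  nlinarith [sq_nonneg (a ^ 2 - b ^ 2)]

theorem arccos_le_of_cos_le {d r : ℝ} (hd₀ : 0 ≤ d) (hd : d ≤ π) (h : cos d ≤ r) :
    arccos r ≤ d :=
  arccos_cos hd₀ hd ▸ arccos_le_arccos h

end Real

theorem sq_norm_sub_le {E : Type*} [SeminormedAddCommGroup E] (x y : E) :
    ‖x - y‖ ^ 2 ≤ 2 * (‖x‖ ^ 2 + ‖y‖ ^ 2) := by
  nlinarith [norm_sub_le x y, norm_nonneg (x - y), sq_nonneg (‖x‖ - ‖y‖)]

section InnerProductSpace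

variable {𝕜 E : Type*} [RCLike 𝕜] [NormedAddCommGroup E] [InnerProductSpace 𝕜 E]

theorem one_add_re_inner_eq (x y : E) :
    1 + RCLike.re ⟪y, x⟫_𝕜 = 1 + (‖x‖ ^ 2 + ‖y‖ ^ 2) / 2 - ‖x - y‖ ^ 2 / 2 := by
  rw [norm_sub_sq (𝕜 := 𝕜), inner_re_symm]
  ring

theorem cos_norm_sub_mul_le (x y : E) (hπ : ‖x - y‖ ≤ π) :
    cos ‖x - y‖ * (√(1 + ‖x‖ ^ 2) * √(1 + ‖y‖ ^ 2)) ≤ ‖1 + ⟪y, x⟫_𝕜‖ := by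
  rcases le_or_gt (cos ‖x - y‖) 0 with hcos | hcos
  · exact (mul_nonpos_of_nonpos_of_nonneg hcos (by positivity)).trans (norm_nonneg _)
  calc cos ‖x - y‖ * (√(1 + ‖x‖ ^ 2) * √(1 + ‖y‖ ^ 2))
      ≤ cos ‖x - y‖ * (1 + (‖x‖ ^ 2 + ‖y‖ ^ 2) / 2) :=
        mul_le_mul_of_nonneg_left (sqrt_one_add_sq_mul_sqrt_one_add_sq_le _ _) hcos.le
    _ ≤ 1 + (‖x‖ ^ 2 + ‖y‖ ^ 2) / 2 - ‖x - y‖ ^ 2 / 2 :=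
        cos_mul_one_add_le (norm_nonneg _) hπ (by linarith [sq_norm_sub_le x y])
    _ = RCLike.re (1 + ⟪y, x⟫_𝕜) := by rw [map_add, RCLike.one_re, one_add_re_inner_eq]
    _ ≤ ‖1 + ⟪y, x⟫_𝕜‖ := RCLike.re_le_norm _

theorem arccos_norm_one_add_inner_div_le (x y : E) :
    arccos (‖1 + ⟪y, x⟫_𝕜‖ / (√(1 + ‖x‖ ^ 2) * √(1 + ‖y‖ ^ 2))) ≤ ‖x - y‖ := by
  rcases le_or_gt π ‖x - y‖ with hπ | hπ
  · exact (arccos_le_pi _).trans hπ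
  exact arccos_le_of_cos_le (norm_nonneg _) hπ.le <|
    (le_div_iff₀ (by positivity)).2 (cos_norm_sub_mul_le x y hπ.le)

end InnerProductSpace

/-- The projective (Fubini–Study) distance between `(1:x)` and `(1:y)` is at most the affine
Euclidean distance `‖x − y‖`:
`arccos(|1 + Σᵢ xᵢ conj(yᵢ)| / (√(1+‖x‖²) √(1+‖y‖²))) ≤ ‖x − y‖`. -/
theorem projective_dist_le_affine_dist (n : ℕ) (x y : EuclideanSpace ℂ (Fin n)) :
    Real.arccos (‖1 + ∑ i, x i * starRingEnd ℂ (y i)‖ /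
        (Real.sqrt (1 + ‖x‖ ^ 2) * Real.sqrt (1 + ‖y‖ ^ 2)))
      ≤ ‖x - y‖ := by
  have hinner : ∑ i, x i * starRingEnd ℂ (y i) = ⟪y, x⟫_ℂ := by
    simp [PiLp.inner_apply]
  rw [hinner]
  exact arccos_norm_one_add_inner_div_le x y
end

section
/- Let d ≥ 1 and n ≥ 0 be integers, and let f, g ∈ ℂ[X₀, …, Xₙ] be homogeneous polynomials of degree d. Define the Bombieri–Weyl Hermitian inner product ⟨f, g⟩ = Σ_{|α|=d} binom(d, α)^{−1} · f_α · conj(g_α), where f = Σ_{|α|=d} f_α X^α, g = Σ_{|α|=d} g_α X^α, and binom(d, α) = d!/(α₀!·⋯·αₙ!) is the multinomial coefficient. Then for every unitary matrix ν ∈ U(n+1), one has ⟨f∘ν, g∘ν⟩ = ⟨f, g⟩, where (f∘ν)(x) := f(νx) is the polynomial obtained by the linear substitution Xⱼ ↦ Σ_k ν_{jk} X_k. -/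
/-!
Up to the factor `d!`, the Bombieri–Weyl product of homogeneous polynomials of degree `d` is the
bilinear Fischer pairing `⟨f, h⟩ = Σ α! f_α h_α` evaluated at `h = conj g`. For this pairing,
multiplication by `X k` is adjoint to `∂/∂X k`. By the chain rule, substituting `μ` into `h`
turns `∂/∂X k` into a combination of the `∂/∂X j` with coefficients `μ j k`, and these cancel
against the substitution `ν` in `f` as soon as `ν μᵀ = 1`. Induction on `f` then gives
`⟨f ∘ ν, h ∘ μ⟩ = ⟨f, h⟩`. A unitary `ν` satisfies this with `μ = conj ν`, and conjugation
commutes with substitution, so `conj (g ∘ ν) = (conj g) ∘ (conj ν)`.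
-/

open MvPolynomial

/-- The Bombieri–Weyl Hermitian inner product of two homogeneous polynomials of degree `d`:
`⟨f, g⟩ = Σ_{|α|=d} binom(d,α)⁻¹ f_α conj(g_α)` (the sum may be taken over the support
of `f`, since all other terms vanish). -/
noncomputable def bombieriWeyl {n : ℕ} (f g : MvPolynomial (Fin (n + 1)) ℂ) : ℂ :=
  ∑ α ∈ f.support,
    ((Nat.multinomial Finset.univ fun k => α k : ℕ) : ℂ)⁻¹ *
      (f.coeff α * starRingEnd ℂ (g.coeff α))

/-- Composition of a polynomial with a linear substitution given by the matrix `ν`,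
i.e. `(f ∘ ν)(x) = f(νx)`: each variable `Xⱼ` is replaced by `Σ_k ν_{jk} X_k`. -/
noncomputable def compMatrix {n : ℕ} (ν : Matrix (Fin (n + 1)) (Fin (n + 1)) ℂ)
    (f : MvPolynomial (Fin (n + 1)) ℂ) : MvPolynomial (Fin (n + 1)) ℂ :=
  aeval (fun j => ∑ k, ν j k • (X k : MvPolynomial (Fin (n + 1)) ℂ)) f

open Finset
open scoped Nat Matrix

namespace MvPolynomial

variable {σ τ R : Type*} [CommSemiring R]

theorem pderiv_bind₁ [Fintype σ] (g : σ → MvPolynomial τ R) (k : τ) (p : MvPolynomial σ R) :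
    pderiv k (bind₁ g p) = ∑ j, bind₁ g (pderiv j p) * pderiv k (g j) := by
  induction p using MvPolynomial.induction_on with
  | C a => simp
  | add p q hp hq => simp only [map_add, hp, hq, add_mul, sum_add_distrib]
  | mul_X p i hp =>
    classical
    simp [Derivation.leibniz, hp, pderiv_X, Pi.single_apply, apply_ite (bind₁ g), add_mul,
      sum_add_distrib, mul_sum, mul_assoc]

theorem constantCoeff_bind₁ {g : σ → MvPolynomial τ R} (hg : ∀ j, constantCoeff (g j) = 0)
    (p : MvPolynomial σ R) : constantCoeff (bind₁ g p) = constantCoeff p := by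
  induction p using MvPolynomial.induction_on with
  | C a => simp
  | add p q hp hq => simp only [map_add, hp, hq]
  | mul_X p i hp => simp [hp, hg]

variable [Fintype σ]

noncomputable def linearSubst (ν : Matrix σ σ R) : MvPolynomial σ R →ₐ[R] MvPolynomial σ R :=
  bind₁ fun j => ∑ k, ν j k • X k

theorem linearSubst_X (ν : Matrix σ σ R) (j : σ) : linearSubst ν (X j) = ∑ k, ν j k • X k :=
  bind₁_X_right _ _

theorem linearSubst_C (ν : Matrix σ σ R) (c : R) : linearSubst ν (C c) = C c :=
  bind₁_C_right _ _

theorem constantCoeff_linearSubst (ν : Matrix σ σ R) (p : MvPolynomial σ R) :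
    constantCoeff (linearSubst ν p) = constantCoeff p :=
  constantCoeff_bind₁ (fun j => by simp) p

theorem pderiv_linearSubst (ν : Matrix σ σ R) (k : σ) (p : MvPolynomial σ R) :
    pderiv k (linearSubst ν p) = ∑ j, ν j k • linearSubst ν (pderiv j p) := by
  classical
  simp only [linearSubst, pderiv_bind₁, map_sum, Derivation.map_smul, pderiv_X, Pi.single_apply,
    smul_ite, smul_zero, sum_ite_eq', mem_univ, if_true, mul_smul_comm, mul_one]

theorem sum_smul_pderiv_linearSubst [DecidableEq σ] {ν μ : Matrix σ σ R} (hνμ : ν * μᵀ = 1)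
    (i : σ) (p : MvPolynomial σ R) :
    ∑ k, ν i k • pderiv k (linearSubst μ p) = linearSubst μ (pderiv i p) := by
  calc ∑ k, ν i k • pderiv k (linearSubst μ p)
      = ∑ j, (ν * μᵀ) i j • linearSubst μ (pderiv j p) := by
        simp only [pderiv_linearSubst, smul_sum, smul_smul, Matrix.mul_apply,
          Matrix.transpose_apply, sum_smul]
        exact sum_comm
    _ = linearSubst μ (pderiv i p) := by
        simp [hνμ, Matrix.one_apply]

theorem map_linearSubst {S : Type*} [CommSemiring S] (f : R →+* S) (ν : Matrix σ σ R)
    (p : MvPolynomial σ R) :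
    map f (linearSubst ν p) = linearSubst (ν.map f) (map f p) := by
  simp [linearSubst, map_bind₁, smul_eq_C_mul]

theorem IsHomogeneous.linearSubst {p : MvPolynomial σ R} {d : ℕ} (hp : p.IsHomogeneous d)
    (ν : Matrix σ σ R) : (linearSubst ν p).IsHomogeneous d := by
  have hlin (j : σ) : (∑ k, ν j k • X k : MvPolynomial σ R).IsHomogeneous 1 :=
    IsHomogeneous.sum univ _ 1 fun k _ => smul_eq_C_mul (X k) (ν j k) ▸ isHomogeneous_C_mul_X _ k
  have h := hp.aeval _ hlin
  rwa [one_mul] at h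

noncomputable def fischerPairing : MvPolynomial σ R →ₗ[R] MvPolynomial σ R →ₗ[R] R :=
  LinearMap.mk₂ R
    (fun f h => (AddMonoidAlgebra.coeff f).sum fun α c => ((∏ i, (α i)! : ℕ) : R) * c * coeff α h)
    (fun f₁ f₂ h => Finsupp.sum_add_index' (by simp) (by simp [mul_add, add_mul]))
    (fun c f h => by
      simp [AddMonoidAlgebra.coeff_smul, Finsupp.sum_smul_index', Finsupp.mul_sum, mul_left_comm,
        mul_assoc])
    (fun f h₁ h₂ => by simp [Finsupp.sum, mul_add, sum_add_distrib])
    (fun c f h => by simp [Finsupp.sum, mul_sum, mul_left_comm])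

theorem fischerPairing_apply (f h : MvPolynomial σ R) :
    fischerPairing f h = ∑ α ∈ f.support, ((∏ i, (α i)! : ℕ) : R) * coeff α f * coeff α h := by
  simp [fischerPairing, sum_def]

theorem fischerPairing_monomial (β : σ →₀ ℕ) (c : R) (h : MvPolynomial σ R) :
    fischerPairing (monomial β c) h = ((∏ i, (β i)! : ℕ) : R) * c * coeff β h := by
  simp [fischerPairing]

theorem fischerPairing_C (c : R) (h : MvPolynomial σ R) :
    fischerPairing (C c) h = c * constantCoeff h := by
  simp [← monomial_zero', fischerPairing_monomial, constantCoeff_eq]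

theorem prod_factorial_add_single (β : σ →₀ ℕ) (k : σ) :
    ∏ i, ((β + Finsupp.single k 1 : σ →₀ ℕ) i)! = (β k + 1) * ∏ i, (β i)! := by
  classical
  rw [Fintype.prod_eq_mul_prod_compl k, Fintype.prod_eq_mul_prod_compl k (fun i => (β i)!),
    prod_congr rfl fun i hi => by
      rw [Finsupp.add_apply, Finsupp.single_eq_of_ne (by simpa using hi), add_zero]]
  simp [Nat.factorial_succ, mul_assoc]

theorem fischerPairing_mul_X (f h : MvPolynomial σ R) (k : σ) :
    fischerPairing (f * X k) h = fischerPairing f (pderiv k h) := by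
  induction f using MvPolynomial.induction_on' with
  | monomial β c =>
    rw [X, monomial_mul, mul_one, fischerPairing_monomial, fischerPairing_monomial, coeff_pderiv,
      prod_factorial_add_single]
    push_cast
    ring
  | add p q hp hq => simp only [add_mul, map_add, LinearMap.add_apply, hp, hq]

theorem fischerPairing_linearSubst [DecidableEq σ] {ν μ : Matrix σ σ R} (hνμ : ν * μᵀ = 1)
    (f h : MvPolynomial σ R) :
    fischerPairing (linearSubst ν f) (linearSubst μ h) = fischerPairing f h := by
  induction f using MvPolynomial.induction_on generalizing h with
  | C c => rw [linearSubst_C, fischerPairing_C, fischerPairing_C, constantCoeff_linearSubst]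
  | add p q hp hq => simp only [map_add, LinearMap.add_apply, hp, hq]
  | mul_X p i hp =>
    calc fischerPairing (linearSubst ν (p * X i)) (linearSubst μ h)
        = ∑ k, ν i k * fischerPairing (linearSubst ν p) (pderiv k (linearSubst μ h)) := by
          simp only [map_mul, linearSubst_X, mul_sum, mul_smul_comm, LinearMap.map_sum₂,
            LinearMap.map_smul₂, fischerPairing_mul_X, smul_eq_mul]
      _ = fischerPairing (linearSubst ν p) (linearSubst μ (pderiv i h)) := by
          rw [← sum_smul_pderiv_linearSubst hνμ, map_sum]
          simp only [map_smul, smul_eq_mul]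
      _ = fischerPairing (p * X i) h := by rw [hp, fischerPairing_mul_X]

end MvPolynomial

theorem compMatrix_eq_linearSubst {n : ℕ} (ν : Matrix (Fin (n + 1)) (Fin (n + 1)) ℂ)
    (f : MvPolynomial (Fin (n + 1)) ℂ) : compMatrix ν f = linearSubst ν f :=
  rfl

theorem bombieriWeyl_eq_fischerPairing {n d : ℕ} {f : MvPolynomial (Fin (n + 1)) ℂ}
    (hf : f.IsHomogeneous d) (g : MvPolynomial (Fin (n + 1)) ℂ) :
    bombieriWeyl f g = (d ! : ℂ)⁻¹ * fischerPairing f (map (starRingEnd ℂ) g) := by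
  rw [bombieriWeyl, fischerPairing_apply, mul_sum]
  refine sum_congr rfl fun α hα => ?_
  have hdeg : ∑ i, α i = d := by
    rw [← Finsupp.degree_eq_sum, Finsupp.degree_eq_weight_one]
    exact hf (mem_support_iff.mp hα)
  have hspec := Nat.multinomial_spec univ α
  rw [hdeg] at hspec
  have hinv : (Nat.multinomial univ α : ℂ)⁻¹ = (d ! : ℂ)⁻¹ * (∏ i, (α i)! : ℕ) := by
    have hprod : ((∏ i, (α i)! : ℕ) : ℂ) ≠ 0 := Nat.cast_ne_zero.mpr (by positivity)
    rw [← hspec, Nat.cast_mul, mul_inv, mul_comm, mul_inv_cancel_left₀ hprod]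
  rw [coeff_map, hinv]
  ring

theorem Matrix.mul_transpose_map_starRingEnd_of_mem_unitaryGroup {ι 𝕜 : Type*} [Fintype ι]
    [DecidableEq ι] [CommRing 𝕜] [StarRing 𝕜] {ν : Matrix ι ι 𝕜}
    (hν : ν ∈ Matrix.unitaryGroup ι 𝕜) : ν * (ν.map (starRingEnd 𝕜))ᵀ = 1 :=
  Matrix.mem_unitaryGroup_iff.mp hν

theorem bombieriWeyl_comp_unitary_general (n d : ℕ)
    (f g : MvPolynomial (Fin (n + 1)) ℂ)
    (hf : f.IsHomogeneous d)
    (ν : Matrix (Fin (n + 1)) (Fin (n + 1)) ℂ)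
    (hν : ν ∈ Matrix.unitaryGroup (Fin (n + 1)) ℂ) :
    bombieriWeyl (compMatrix ν f) (compMatrix ν g) = bombieriWeyl f g := by
  rw [compMatrix_eq_linearSubst, compMatrix_eq_linearSubst,
    bombieriWeyl_eq_fischerPairing (hf.linearSubst ν), bombieriWeyl_eq_fischerPairing hf,
    map_linearSubst,
    fischerPairing_linearSubst (Matrix.mul_transpose_map_starRingEnd_of_mem_unitaryGroup hν)]

/-- Unitary invariance of the Bombieri–Weyl Hermitian inner product: for homogeneous
`f, g` of degree `d` and unitary `ν ∈ U(n+1)`, `⟨f∘ν, g∘ν⟩ = ⟨f, g⟩`. -/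
theorem bombieriWeyl_comp_unitary (n d : ℕ) (hd : 1 ≤ d)
    (f g : MvPolynomial (Fin (n + 1)) ℂ)
    (hf : f.IsHomogeneous d) (hg : g.IsHomogeneous d)
    (ν : Matrix (Fin (n + 1)) (Fin (n + 1)) ℂ)
    (hν : ν ∈ Matrix.unitaryGroup (Fin (n + 1)) ℂ) :
    bombieriWeyl (compMatrix ν f) (compMatrix ν g) = bombieriWeyl f g :=
  bombieriWeyl_comp_unitary_general n d f g hf ν hν
end
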